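/- Let k be an algebraically closed field of characteristic 2, and a₀, a₂, a₄ ∈ k with a₂ ≠ 0. For every smooth point P of the plane quartic C : Y⁴ + a₄ X⁴ + a₂ X² Z² + X Z³ + a₀ Z⁴ = 0, the tangent line at P meets C only at the point P (so every smooth point is a non-ordinary inflection point: the intersection multiplicity of the tangent line with C at P equals 4). -/

import Mathlib

open MvPolynomial

/-- The quartic `Y⁴ + a₄ X⁴ + a₂ X² Z² + X Z³ + a₀ Z⁴` (variables `X 0 = X, X 1 = Y, X 2 = Z`). -/
noncomputable def quarticI' {R : Type*} [CommRing R] (a₀ a₂ a₄ : R) : MvPolynomial (Fin 3) R :=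
  (X 1) ^ 4 + C a₄ * (X 0) ^ 4 + C a₂ * (X 0) ^ 2 * (X 2) ^ 2 + X 0 * (X 2) ^ 3 + C a₀ * (X 2) ^ 4

theorem quartic_pd0 {k : Type*} [Field k] [CharP k 2] (a₀ a₂ a₄ : k) (x y z : k) :
    eval ![x, y, z] (pderiv 0 (quarticI' a₀ a₂ a₄)) = z^3 := by
  have h2 : (2:k) = 0 := CharP.cast_eq_zero k 2
  simp [quarticI', pderiv_X, Pi.single_apply]
  linear_combination (2*a₄*x^3 + a₂*x*z^2) * h2

theorem quartic_pd1 {k : Type*} [Field k] [CharP k 2] (a₀ a₂ a₄ : k) (x y z : k) :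
    eval ![x, y, z] (pderiv 1 (quarticI' a₀ a₂ a₄)) = 0 := by
  have h2 : (2:k) = 0 := CharP.cast_eq_zero k 2
  simp [quarticI', pderiv_X, Pi.single_apply]
  left; linear_combination 2*h2

theorem quartic_pd2 {k : Type*} [Field k] [CharP k 2] (a₀ a₂ a₄ : k) (x y z : k) :
    eval ![x, y, z] (pderiv 2 (quarticI' a₀ a₂ a₄)) = x*z^2 := by
  have h2 : (2:k) = 0 := CharP.cast_eq_zero k 2
  simp [quarticI', pderiv_X, Pi.single_apply]
  linear_combination (a₂*x^2*z + x*z^2 + 2*a₀*z^3) * h2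

theorem quartic_ev {k : Type*} [Field k] (a₀ a₂ a₄ : k) (x y z : k) :
    eval ![x, y, z] (quarticI' a₀ a₂ a₄) = y^4 + a₄*x^4 + a₂*x^2*z^2 + x*z^3 + a₀*z^4 := by
  simp [quarticI']

/-- Over an algebraically closed field `k` of characteristic 2 with `a₂ ≠ 0`,
for every smooth point `P = (x₀ : y₀ : z₀)` of the plane quartic
`C : Y⁴ + a₄X⁴ + a₂X²Z² + XZ³ + a₀Z⁴ = 0`, the tangent line
`F_X(P)·X + F_Y(P)·Y + F_Z(P)·Z = 0` at `P` meets `C` only at the point `P`. -/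
theorem stmt_6 {k : Type*} [Field k] [IsAlgClosed k] [CharP k 2] (a₀ a₂ a₄ : k) (ha₂ : a₂ ≠ 0)
    (x₀ y₀ z₀ : k) (hP0 : ¬ (x₀ = 0 ∧ y₀ = 0 ∧ z₀ = 0))
    (hPC : eval ![x₀, y₀, z₀] (quarticI' a₀ a₂ a₄) = 0)
    (hPsm : ∃ i : Fin 3, eval ![x₀, y₀, z₀] (pderiv i (quarticI' a₀ a₂ a₄)) ≠ 0) :
    ∀ x y z : k, ¬ (x = 0 ∧ y = 0 ∧ z = 0) →
      eval ![x, y, z] (quarticI' a₀ a₂ a₄) = 0 →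
      eval ![x₀, y₀, z₀] (pderiv 0 (quarticI' a₀ a₂ a₄)) * x
        + eval ![x₀, y₀, z₀] (pderiv 1 (quarticI' a₀ a₂ a₄)) * y
        + eval ![x₀, y₀, z₀] (pderiv 2 (quarticI' a₀ a₂ a₄)) * z = 0 →
      ∃ e : k, e ≠ 0 ∧ x = e * x₀ ∧ y = e * y₀ ∧ z = e * z₀ := by
  intro x y z hxyz hC hT
  have h2 : (2:k) = 0 := CharP.cast_eq_zero k 2
  rw [quartic_pd0, quartic_pd1, quartic_pd2] at hT
  have hz₀ : z₀ ≠ 0 := by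
    intro h
    subst h
    obtain ⟨i, hi⟩ := hPsm
    fin_cases i
    · exact hi (by simpa using quartic_pd0 a₀ a₂ a₄ x₀ y₀ 0)
    · exact hi (by simpa using quartic_pd1 a₀ a₂ a₄ x₀ y₀ 0)
    · exact hi (by simpa using quartic_pd2 a₀ a₂ a₄ x₀ y₀ 0)
  rw [quartic_ev] at hC hPC
  have hlin : z₀ * x = x₀ * z := by
    have h : z₀ ^ 2 * (z₀ * x + x₀ * z) = 0 := by linear_combination hT
    rcases mul_eq_zero.mp h with h | h
    · exact absurd h (pow_ne_zero 2 hz₀)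
    · linear_combination h - x₀ * z * h2
  by_cases hz : z = 0
  · exfalso
    subst hz
    have hx : x = 0 := by
      have h0 : z₀ * x = 0 := by rw [hlin]; ring
      exact (mul_eq_zero.mp h0).resolve_left hz₀
    subst hx
    have hy : y = 0 := by
      have h4 : y ^ 4 = 0 := by linear_combination hC
      exact pow_eq_zero_iff (by norm_num) |>.mp h4
    exact hxyz ⟨rfl, hy, rfl⟩
  · refine ⟨z / z₀, div_ne_zero hz hz₀, ?_, ?_, ?_⟩
    · field_simp
      linear_combination hlin
    · have hx : x = z / z₀ * x₀ := by field_simp; linear_combination hlin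
      set e := z / z₀ with he
      have hze : z = e * z₀ := by rw [he]; field_simp
      have key : (y + e * y₀) ^ 4 = 0 := by
        rw [hx] at hC
        rw [hze] at hC
        linear_combination hC - e^4 * hPC +
          (2*y^3*e*y₀ + 3*y^2*e^2*y₀^2 + 2*y*e^3*y₀^3 + e^4*y₀^4) * h2
      have hy : y + e * y₀ = 0 := pow_eq_zero_iff (by norm_num) |>.mp key
      linear_combination hy - e * y₀ * h2
    · field_simp
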